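/- Trace norm is dominated by the Araki–Masuda 2-norm: for B ∈ M_n(ℂ) positive definite with tr(B) = 1 and any X ∈ M_n(ℂ), ‖X‖₁² ≤ tr(X* B^{-1/2} X B^{-1/2}), where ‖X‖₁ = tr(|X|). -/

import Mathlib

open Matrix
open scoped ComplexOrder

noncomputable section

-- Ported: `Matrix.PosSemidef.sqrt` was removed from Mathlib; restated with its old definition.
def Matrix.PosSemidef.sqrt {m 𝕜 : Type*} [Fintype m] [DecidableEq m] [RCLike 𝕜]
    {A : Matrix m m 𝕜} (hA : A.PosSemidef) : Matrix m m 𝕜 :=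
  hA.1.eigenvectorUnitary.1 * diagonal ((↑) ∘ (√·) ∘ hA.1.eigenvalues) *
    (star hA.1.eigenvectorUnitary : Matrix m m 𝕜)

theorem Matrix.PosSemidef.posSemidef_sqrt {m 𝕜 : Type*} [Fintype m] [DecidableEq m] [RCLike 𝕜]
    {A : Matrix m m 𝕜} (hA : A.PosSemidef) : hA.sqrt.PosSemidef := by
  unfold Matrix.PosSemidef.sqrt
  have hd : (diagonal ((↑) ∘ (√·) ∘ hA.1.eigenvalues) : Matrix m m 𝕜).PosSemidef :=
    posSemidef_diagonal_iff.mpr fun i => by simp [RCLike.ofReal_nonneg, Real.sqrt_nonneg]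
  have := hd.mul_mul_conjTranspose_same (hA.1.eigenvectorUnitary.1)
  simpa [Matrix.star_eq_conjTranspose] using this

theorem Matrix.PosSemidef.sqrt_mul_self {m 𝕜 : Type*} [Fintype m] [DecidableEq m] [RCLike 𝕜]
    {A : Matrix m m 𝕜} (hA : A.PosSemidef) : hA.sqrt * hA.sqrt = A := by
  unfold Matrix.PosSemidef.sqrt
  have hU : (star hA.1.eigenvectorUnitary : Matrix m m 𝕜) * hA.1.eigenvectorUnitary.1 = 1 := by
    simp
  conv_rhs => rw [hA.1.spectral_theorem]
  rw [show ∀ a b c : Matrix m m 𝕜, a * b * c * (a * b * c) = a * b * (c * a) * b * c by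
    intros; simp only [mul_assoc]]
  rw [hU, mul_one, mul_assoc _ (diagonal _) (diagonal _), diagonal_mul_diagonal]
  congr 2
  · congr 1
    funext i
    simp only [Function.comp_apply]
    rw [← RCLike.ofReal_mul, Real.mul_self_sqrt (hA.eigenvalues_nonneg i)]

abbrev Mat (n : ℕ) := Matrix (Fin n) (Fin n) ℂ

/-- Apply `φ` entrywise to the `n × n` blocks of an `m·n × m·n` matrix. -/
def blockApply {n k : ℕ} (φ : Mat n →ₗ[ℂ] Mat k) (m : ℕ)
    (M : Matrix (Fin m × Fin n) (Fin m × Fin n) ℂ) :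
    Matrix (Fin m × Fin k) (Fin m × Fin k) ℂ :=
  Matrix.of fun p q => φ (Matrix.of fun a b => M (p.1, a) (q.1, b)) p.2 q.2

/-- Complete positivity of a linear map between matrix algebras. -/
def IsCP {n k : ℕ} (φ : Mat n →ₗ[ℂ] Mat k) : Prop :=
  ∀ (m : ℕ) (M : Matrix (Fin m × Fin n) (Fin m × Fin n) ℂ),
    M.PosSemidef → (blockApply φ m M).PosSemidef

/-- Trace preservation. -/
def IsTP {n k : ℕ} (φ : Mat n →ₗ[ℂ] Mat k) : Prop :=
  ∀ X : Mat n, (φ X).trace = X.trace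

/-- The Hilbert–Schmidt adjoint of `φ`, characterized by
`tr (hsAdj φ A * Xᴴ) = tr (A * (φ X)ᴴ)` for all `X`. -/
def hsAdj {n k : ℕ} (φ : Mat n →ₗ[ℂ] Mat k) (A : Mat k) : Mat n :=
  Matrix.of fun i j => (A * (φ (Matrix.single i j 1))ᴴ).trace

/-- The trace norm `tr |X| = tr ((Xᴴ X)^{1/2})`. -/
def traceNorm {n : ℕ} (X : Mat n) : ℝ :=
  ((Matrix.posSemidef_conjTranspose_mul_self X).sqrt.trace).re


/-- The positive square root of a positive definite matrix. -/
def sqrtPD {n : ℕ} {B : Mat n} (hB : B.PosDef) : Mat n := hB.posSemidef.sqrt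

/-- `B^{-1/2}` for a positive definite `B`. -/
def invSqrtPD {n : ℕ} {B : Mat n} (hB : B.PosDef) : Mat n := (sqrtPD hB)⁻¹

/-- `B^{-1/4}` for a positive definite `B`. -/
def invFourthPD {n : ℕ} {B : Mat n} (hB : B.PosDef) : Mat n :=
  (hB.posSemidef.posSemidef_sqrt.sqrt)⁻¹

/-- The sandwiched 2-Rényi quasi-relative entropy functional
`S₂(A|B) = tr ((B^{-1/4} A B^{-1/4})²)`. -/
def S2 {n : ℕ} (A : Mat n) {B : Mat n} (hB : B.PosDef) : ℝ :=
  (((invFourthPD hB * A * invFourthPD hB) ^ 2).trace).re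

/-- The squared Araki–Masuda weighted 2-norm `‖X‖²_{B,2}`. -/
def wNormSq {n : ℕ} (X : Mat n) {B : Mat n} (hB : B.PosDef) : ℝ :=
  (((invFourthPD hB * X * invFourthPD hB)ᴴ * (invFourthPD hB * X * invFourthPD hB)).trace).re

/-- The Petz recovery map `Y ↦ B^{1/2} φ*(φ(B)^{-1/2} Y φ(B)^{-1/2}) B^{1/2}`. -/
def petz {n k : ℕ} (φ : Mat n →ₗ[ℂ] Mat k) {B : Mat n} (hB : B.PosDef)
    (hφB : (φ B).PosDef) (Y : Mat k) : Mat n :=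
  sqrtPD hB * hsAdj φ (invSqrtPD hφB * Y * invSqrtPD hφB) * sqrtPD hB

/-- Squared Frobenius (Hilbert–Schmidt) norm. -/
def frobSq {n : ℕ} (X : Mat n) : ℝ := ((Xᴴ * X).trace).re


lemma retr_nonneg {n : ℕ} {M : Mat n} (hM : M.PosSemidef) : 0 ≤ M.trace.re := by
  rw [Matrix.trace, Complex.re_sum]
  refine Finset.sum_nonneg fun i _ => ?_
  have := hM.re_dotProduct_nonneg (Pi.single i 1)
  simpa [dotProduct, Matrix.mulVec_single, Pi.single_apply, Finset.sum_ite_eq,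
    Matrix.diag] using this

lemma trace_inner {n : ℕ} (A C : Mat n) :
    (Aᴴ * C).trace = inner (𝕜 := ℂ) (WithLp.toLp 2 (fun p : Fin n × Fin n => A p.1 p.2) : EuclideanSpace ℂ (Fin n × Fin n))
      (WithLp.toLp 2 (fun p : Fin n × Fin n => C p.1 p.2) : EuclideanSpace ℂ (Fin n × Fin n)) := by
  simp only [PiLp.inner_apply, RCLike.inner_apply, Matrix.trace, Matrix.diag, Matrix.mul_apply,
    Matrix.conjTranspose_apply, Fintype.sum_prod_type, RCLike.star_def]
  rw [Finset.sum_comm]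
  exact Finset.sum_congr rfl fun _ _ => Finset.sum_congr rfl fun _ _ => mul_comm _ _

lemma trace_cs {n : ℕ} (A C : Mat n) :
    ‖(Aᴴ * C).trace‖ ^ 2 ≤ ((Aᴴ * A).trace).re * ((Cᴴ * C).trace).re := by
  rw [trace_inner A C]
  have h1 : ((Aᴴ * A).trace).re
      = ‖(WithLp.toLp 2 (fun p : Fin n × Fin n => A p.1 p.2) : EuclideanSpace ℂ (Fin n × Fin n))‖ ^ 2 := by
    rw [trace_inner A A, ← inner_self_eq_norm_sq (𝕜 := ℂ)]; rfl
  have h2 : ((Cᴴ * C).trace).re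
      = ‖(WithLp.toLp 2 (fun p : Fin n × Fin n => C p.1 p.2) : EuclideanSpace ℂ (Fin n × Fin n))‖ ^ 2 := by
    rw [trace_inner C C, ← inner_self_eq_norm_sq (𝕜 := ℂ)]; rfl
  rw [h1, h2]
  calc ‖_‖^2 ≤ (‖_‖ * ‖_‖)^2 := by
        apply pow_le_pow_left₀ (norm_nonneg _) (norm_inner_le_norm _ _)
    _ = _ := by ring

lemma re_sq_le_norm_sq (z : ℂ) : z.re ^ 2 ≤ ‖z‖ ^ 2 := by
  rw [Complex.sq_norm, Complex.normSq_apply]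
  nlinarith [sq_nonneg z.im]

lemma PDP_mul {n : ℕ} {P : Mat n} (hP : Pᴴ * P = 1) (f g : Fin n → ℂ) :
    (P * Matrix.diagonal f * Pᴴ) * (P * Matrix.diagonal g * Pᴴ)
      = P * Matrix.diagonal (fun i => f i * g i) * Pᴴ := by
  simp only [mul_assoc]
  rw [← mul_assoc Pᴴ P, hP, one_mul, ← mul_assoc (Matrix.diagonal f),
    Matrix.diagonal_mul_diagonal]

lemma retr_mul_le {n : ℕ} {K B S : Mat n} (hS : Sᴴ = S) (hSS : S * S = B)
    (hK : ((1 : Mat n) - K).PosSemidef) : ((K * B).trace).re ≤ (B.trace).re := by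
  have psd : (Sᴴ * ((1 : Mat n) - K) * S).PosSemidef := hK.conjTranspose_mul_mul_same S
  have h0 : 0 ≤ ((Sᴴ * ((1 : Mat n) - K) * S).trace).re := retr_nonneg psd
  have h1 : (Sᴴ * ((1 : Mat n) - K) * S).trace = (B * ((1 : Mat n) - K)).trace := by
    rw [Matrix.trace_mul_cycle, hS, hSS]
  rw [h1] at h0
  have h2 : B * ((1 : Mat n) - K) = B - B * K := by rw [mul_sub, mul_one]
  rw [h2, Matrix.trace_sub, Complex.sub_re] at h0
  have h3 : (B * K).trace = (K * B).trace := Matrix.trace_mul_comm B K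
  rw [h3] at h0
  linarith

set_option maxHeartbeats 1000000 in
theorem traceNorm_le_wNorm {n : ℕ} {B : Mat n} (hB : B.PosDef) (htrB : B.trace = 1)
    (X : Mat n) :
    traceNorm X ^ 2 ≤ ((Xᴴ * invSqrtPD hB * X * invSqrtPD hB).trace).re := by
  classical
  -- Part 1: square root and fourth root of B
  set S₂ : Mat n := hB.posSemidef.sqrt with hS2def
  set R : Mat n := hB.posSemidef.posSemidef_sqrt.sqrt with hRdef
  have hRH : Rᴴ = R := hB.posSemidef.posSemidef_sqrt.posSemidef_sqrt.1
  have hS2H : S₂ᴴ = S₂ := hB.posSemidef.posSemidef_sqrt.1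
  have hRR : R * R = S₂ := hB.posSemidef.posSemidef_sqrt.sqrt_mul_self
  have hSS : S₂ * S₂ = B := hB.posSemidef.sqrt_mul_self
  have hdetR : IsUnit R.det := by
    rw [← isUnit_pow_iff (n := 4) (by norm_num : (4:ℕ) ≠ 0)]
    have h4 : R.det ^ 4 = B.det := by
      rw [← hSS, ← hRR]
      simp only [Matrix.det_mul]
      ring
    rw [h4]
    exact hB.det_pos.ne'.isUnit
  set T : Mat n := R⁻¹ with hTdef
  have hRT : R * T = 1 := Matrix.mul_nonsing_inv _ hdetR
  have hTR : T * R = 1 := Matrix.nonsing_inv_mul _ hdetR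
  have hTH : Tᴴ = T := by rw [hTdef, Matrix.conjTranspose_nonsing_inv, hRH]
  have hinvS : invSqrtPD hB = T * T := by
    show S₂⁻¹ = T * T
    rw [← hRR, Matrix.mul_inv_rev]
  rw [hinvS]
  -- Part 2: the contraction M with tr(Mᴴ X) = tr |X|
  have hXX := Matrix.posSemidef_conjTranspose_mul_self X
  have hH : (Xᴴ * X).IsHermitian := hXX.1
  set P : Mat n := (hH.eigenvectorUnitary : Mat n) with hPdef
  set d : Fin n → ℝ := hH.eigenvalues with hddef
  have hd : ∀ i, 0 ≤ d i := fun i => hXX.eigenvalues_nonneg i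
  have hPP : Pᴴ * P = 1 := by
    simpa [Matrix.star_eq_conjTranspose] using mem_unitaryGroup_iff'.mp hH.eigenvectorUnitary.2
  have hPP' : P * Pᴴ = 1 := by
    simpa [Matrix.star_eq_conjTranspose] using mem_unitaryGroup_iff.mp hH.eigenvectorUnitary.2
  set g : Fin n → ℝ := fun i => if d i = 0 then 0 else (Real.sqrt (d i))⁻¹ with hgdef
  set Q : (Fin n → ℝ) → Mat n := fun f => P * Matrix.diagonal ((↑) ∘ f) * Pᴴ with hQdef
  have hQmul : ∀ f₁ f₂, Q f₁ * Q f₂ = Q (fun i => f₁ i * f₂ i) := by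
    intro f₁ f₂
    rw [hQdef]
    simp only
    rw [PDP_mul hPP]
    have : (fun i => (Complex.ofReal ∘ f₁) i * (Complex.ofReal ∘ f₂) i)
        = (Complex.ofReal ∘ fun i => f₁ i * f₂ i) := by
      funext i; simp
    rw [this]
  have hQH : ∀ f, (Q f)ᴴ = Q f := by
    intro f
    rw [hQdef]
    simp only
    rw [Matrix.conjTranspose_mul, Matrix.conjTranspose_mul, Matrix.conjTranspose_conjTranspose,
      Matrix.diagonal_conjTranspose]
    have : star (Complex.ofReal ∘ f) = Complex.ofReal ∘ f := by
      funext i; simp [Pi.star_apply]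
    rw [this, ← mul_assoc]
  have hXXQ : Xᴴ * X = Q d := by
    exact hH.spectral_theorem
  set M : Mat n := X * Q g with hMdef
  have hMH : Mᴴ = Q g * Xᴴ := by rw [hMdef, Matrix.conjTranspose_mul, hQH]
  have hgd : (fun i => g i * d i) = (fun i => Real.sqrt (d i)) := by
    funext i
    by_cases h : d i = 0
    · simp [hgdef, h]
    · have hdi : 0 < d i := lt_of_le_of_ne (hd i) (Ne.symm h)
      have hs : Real.sqrt (d i) ≠ 0 := by positivity
      simp only [hgdef, if_neg h]
      field_simp
      rw [Real.sq_sqrt hdi.le]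
  -- key1
  have key1 : Mᴴ * X = hXX.sqrt := by
    have h : Mᴴ * X = Q g * (Xᴴ * X) := by rw [hMH, mul_assoc]
    rw [h]
    conv_lhs => rw [hXXQ]
    rw [hQmul, hgd]
    rfl
  -- key2 : 1 - Mᴴ M  psd
  have hQone : (1 : Mat n) = Q (fun _ => 1) := by
    rw [hQdef]
    simp only
    have : (Complex.ofReal ∘ fun _ : Fin n => (1:ℝ)) = (fun _ => (1:ℂ)) := by funext i; simp
    rw [this, Matrix.diagonal_one, mul_one, hPP']
  have hQsub : ∀ f₁ f₂, Q f₁ - Q f₂ = Q (fun i => f₁ i - f₂ i) := by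
    intro f₁ f₂
    rw [hQdef]
    simp only
    rw [← sub_mul, ← mul_sub, Matrix.diagonal_sub]
    have : (fun i => (Complex.ofReal ∘ f₁) i - (Complex.ofReal ∘ f₂) i)
        = Complex.ofReal ∘ fun i => f₁ i - f₂ i := by
      funext i; simp
    rw [this]
  have hQpsd : ∀ f : Fin n → ℝ, (∀ i, 0 ≤ f i) → (Q f).PosSemidef := by
    intro f hf
    rw [hQdef]
    simp only
    refine Matrix.PosSemidef.mul_mul_conjTranspose_same ?_ P
    refine Matrix.PosSemidef.diagonal ?_
    intro i
    simpa using Complex.real_le_real.mpr (hf i)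
  have hMM : Mᴴ * M = Q (fun i => g i * d i * g i) := by
    have h : Mᴴ * M = Q g * (Xᴴ * X) * Q g := by
      rw [hMH, hMdef]
      simp only [mul_assoc]
    rw [h]
    conv_lhs => rw [hXXQ]
    rw [hQmul, hQmul]
  have key2 : ((1 : Mat n) - Mᴴ * M).PosSemidef := by
    rw [hMM, hQone, hQsub]
    refine hQpsd _ fun i => ?_
    by_cases h : d i = 0
    · simp [hgdef, h]
    · have h1 : g i * d i * g i = 1 := by
        rw [congrFun hgd i]
        have hdi : 0 < d i := lt_of_le_of_ne (hd i) (Ne.symm h)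
        have hs : Real.sqrt (d i) ≠ 0 := by positivity
        simp [hgdef, if_neg h, mul_inv_cancel₀ hs]
      rw [h1]
      norm_num
  -- key3 : 1 - M Mᴴ  psd
  have hK : M * Mᴴ = X * Q (fun i => g i * g i) * Xᴴ := by
    rw [hMH, hMdef]
    simp only [mul_assoc]
    rw [← mul_assoc (Q g), hQmul]
  have hKK : (M * Mᴴ) * (M * Mᴴ) = M * Mᴴ := by
    rw [hK]
    have h : X * Q (fun i => g i * g i) * Xᴴ * (X * Q (fun i => g i * g i) * Xᴴ)
        = X * (Q (fun i => g i * g i) * (Xᴴ * X) * Q (fun i => g i * g i)) * Xᴴ := by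
      simp only [mul_assoc]
    rw [h]
    conv_lhs => rw [hXXQ]
    simp only [hQmul]
    have e : (fun i => g i * g i * d i * (g i * g i)) = (fun i => g i * g i) := by
      funext i
      by_cases h : d i = 0
      · simp [hgdef, h]
      · have hdi : 0 < d i := lt_of_le_of_ne (hd i) (Ne.symm h)
        have hs : Real.sqrt (d i) ≠ 0 := by positivity
        simp only [hgdef, if_neg h]
        field_simp
        rw [Real.sq_sqrt hdi.le]
    rw [e]
  have hKH : ((1 : Mat n) - M * Mᴴ)ᴴ = (1 : Mat n) - M * Mᴴ := by
    rw [Matrix.conjTranspose_sub, Matrix.conjTranspose_one,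
      (Matrix.isHermitian_mul_conjTranspose_self M).eq]
  have key3 : ((1 : Mat n) - M * Mᴴ).PosSemidef := by
    have h : (1 : Mat n) - M * Mᴴ = ((1 : Mat n) - M * Mᴴ)ᴴ * ((1 : Mat n) - M * Mᴴ) := by
      rw [hKH]
      have expand : ((1 : Mat n) - M * Mᴴ) * ((1 : Mat n) - M * Mᴴ)
          = 1 - M * Mᴴ - M * Mᴴ + M * Mᴴ * (M * Mᴴ) := by noncomm_ring
      rw [expand, hKK]
      abel
    rw [h]
    exact Matrix.posSemidef_conjTranspose_mul_self _
  -- Part 3: the inequality chain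
  have htn : traceNorm X = ((Mᴴ * X).trace).re := by rw [traceNorm, ← key1]
  set Y : Mat n := T * X * T with hYdef
  set A : Mat n := R * M * R with hAdef
  have hAH : Aᴴ = R * (Mᴴ * R) := by
    rw [hAdef, Matrix.conjTranspose_mul, Matrix.conjTranspose_mul, hRH]
  have htr1 : (Aᴴ * Y).trace = (Mᴴ * X).trace := by
    have h : Aᴴ * Y = R * (Mᴴ * (X * T)) := by
      rw [hAH, hYdef]
      simp only [mul_assoc]
      rw [← mul_assoc R T, hRT, one_mul]
    rw [h, Matrix.trace_mul_comm]
    simp only [mul_assoc]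
    rw [hTR, mul_one]
  have htr2 : ((Yᴴ * Y).trace) = ((Xᴴ * (T * T) * X * (T * T)).trace) := by
    have hYH : Yᴴ = T * (Xᴴ * T) := by
      rw [hYdef, Matrix.conjTranspose_mul, Matrix.conjTranspose_mul, hTH]
    rw [hYH, hYdef]
    simp only [mul_assoc]
    rw [Matrix.trace_mul_comm T]
    simp only [mul_assoc]
  -- bound : re tr(Aᴴ A) ≤ 1
  have htrB1 : (B.trace).re = 1 := by rw [htrB]; rfl
  have boundC : (((M * S₂)ᴴ * (M * S₂)).trace).re ≤ 1 := by
    have h : ((M * S₂)ᴴ * (M * S₂)).trace = ((Mᴴ * M) * B).trace := by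
      rw [Matrix.conjTranspose_mul, hS2H, ← mul_assoc,
        Matrix.trace_mul_cycle (S₂ * Mᴴ) M S₂, ← mul_assoc S₂ S₂ Mᴴ, hSS,
        Matrix.trace_mul_cycle Mᴴ M B]
    rw [h]
    exact (retr_mul_le hS2H hSS key2).trans_eq htrB1
  have boundD : (((S₂ * M)ᴴ * (S₂ * M)).trace).re ≤ 1 := by
    have h : ((S₂ * M)ᴴ * (S₂ * M)).trace = ((M * Mᴴ) * B).trace := by
      rw [Matrix.conjTranspose_mul, hS2H, ← mul_assoc, mul_assoc Mᴴ S₂ S₂, hSS,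
        Matrix.trace_mul_cycle Mᴴ B M]
    rw [h]
    exact (retr_mul_le hS2H hSS key3).trans_eq htrB1
  have htrAA : (Aᴴ * A).trace = ((M * S₂)ᴴ * (S₂ * M)).trace := by
    rw [hAH, hAdef, Matrix.conjTranspose_mul M S₂, hS2H]
    simp only [← mul_assoc]
    rw [Matrix.trace_mul_comm (R * Mᴴ * R * R * M) R]
    simp only [← mul_assoc]
    rw [hRR, mul_assoc (S₂ * Mᴴ) R R, hRR]
  have boundAA : ((Aᴴ * A).trace).re ≤ 1 := by
    have hcs := trace_cs (M * S₂) (S₂ * M)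
    have h0C : 0 ≤ (((M * S₂)ᴴ * (M * S₂)).trace).re :=
      retr_nonneg (Matrix.posSemidef_conjTranspose_mul_self (M * S₂))
    have h0D : 0 ≤ (((S₂ * M)ᴴ * (S₂ * M)).trace).re :=
      retr_nonneg (Matrix.posSemidef_conjTranspose_mul_self (S₂ * M))
    have hnorm2 : ‖((M * S₂)ᴴ * (S₂ * M)).trace‖ ^ 2 ≤ 1 := by nlinarith
    have hnorm : ‖((M * S₂)ᴴ * (S₂ * M)).trace‖ ≤ 1 := by
      nlinarith [norm_nonneg (((M * S₂)ᴴ * (S₂ * M)).trace)]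
    calc ((Aᴴ * A).trace).re = (((M * S₂)ᴴ * (S₂ * M)).trace).re := by rw [htrAA]
      _ ≤ ‖((M * S₂)ᴴ * (S₂ * M)).trace‖ := by
          exact Complex.re_le_norm _
      _ ≤ 1 := hnorm
  calc traceNorm X ^ 2 = ((Mᴴ * X).trace).re ^ 2 := by rw [htn]
    _ ≤ ‖(Mᴴ * X).trace‖ ^ 2 := re_sq_le_norm_sq _
    _ = ‖(Aᴴ * Y).trace‖ ^ 2 := by rw [htr1]
    _ ≤ ((Aᴴ * A).trace).re * ((Yᴴ * Y).trace).re := trace_cs A Y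
    _ ≤ 1 * ((Yᴴ * Y).trace).re := by
        exact mul_le_mul_of_nonneg_right boundAA
          (retr_nonneg (Matrix.posSemidef_conjTranspose_mul_self Y))
    _ = ((Xᴴ * (T * T) * X * (T * T)).trace).re := by rw [one_mul, htr2]
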